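/- arXiv:math/0310024 — 3 statements merged into one kernel-verified Lean document; each statement's English description precedes it below -/
import Mathlib

section
/- Let A_V := {W ∈ ℝ^{3s} : R(W_1, W_2, W_3, W) = 0 for all W_1, W_2, W_3}, let A_{T,V} := A_V^⊥ with respect to g, and let σ_U : ℝ^{3s} → ℝ^{3s}/A_{T,V} be the quotient map. For any two normalized bases B = {U_i, T_i, V_i} and B̃ = {Ũ_i, T̃_i, Ṽ_i} of ℝ^{3s}, the positive definite inner product g_{U,B} on ℝ^{3s}/A_{T,V} determined by declaring (σ_U(U_1), …, σ_U(U_s)) orthonormal equals the inner product g_{U,B̃} determined by declaring (σ_U(Ũ_1), …, σ_U(Ũ_s)) orthonormal; equivalently, the matrix expressing (σ_U(Ũ_j)) in terms of (σ_U(U_k)) is orthogonal. -/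
open scoped BigOperators

noncomputable section

/-- Index type for `ℝ^{3s}`: the first block indexes `U_1,…,U_s`, the second block
`T_1,…,T_s`, the third block `V_1,…,V_s`. -/
abbrev Ix (s : ℕ) := Fin s ⊕ Fin s ⊕ Fin s

/-- The vector space `ℝ^{3s}`. -/
abbrev Vc (s : ℕ) := Ix s → ℝ

def uI {s : ℕ} (i : Fin s) : Ix s := Sum.inl i
def tI {s : ℕ} (i : Fin s) : Ix s := Sum.inr (Sum.inl i)
def vI {s : ℕ} (i : Fin s) : Ix s := Sum.inr (Sum.inr i)

/-- The standard basis vector `U_i`. -/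
def Uv {s : ℕ} (i : Fin s) : Vc s := Pi.single (uI i) 1
/-- The standard basis vector `T_i`. -/
def Tv {s : ℕ} (i : Fin s) : Vc s := Pi.single (tI i) 1
/-- The standard basis vector `V_i`. -/
def Vv {s : ℕ} (i : Fin s) : Vc s := Pi.single (vI i) 1

/-- The symmetric bilinear form `g` on `ℝ^{3s}` whose only nonzero values on the
standard basis vectors are `g(U_i,V_i) = g(V_i,U_i) = 1` and `g(T_i,T_i) = -1`. -/
def gM (s : ℕ) (x y : Vc s) : ℝ :=
  ∑ i, (x (uI i) * y (vI i) + x (vI i) * y (uI i) - x (tI i) * y (tI i))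

/-- The 4-linear form `R` on `ℝ^{3s}` determined by the `ℤ₂`-symmetries
`R(x,y,z,w) = R(z,w,x,y) = -R(y,x,z,w)` and whose nonzero values on the standard
basis vectors, up to those symmetries, are `R(U_i,U_j,U_j,T_i) = 1` for `i ≠ j`.
(The eight summands below are precisely the full `ℤ₂`-orbit of the generating
components; the summands cancel in pairs when `i = j`.) -/
def RM (s : ℕ) (x y z w : Vc s) : ℝ :=
  ∑ i, ∑ j,
    (x (uI i) * y (uI j) * z (uI j) * w (tI i)
     - x (uI j) * y (uI i) * z (uI j) * w (tI i)
     - x (uI i) * y (uI j) * z (tI i) * w (uI j)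
     + x (uI j) * y (uI i) * z (tI i) * w (uI j)
     + x (uI j) * y (tI i) * z (uI i) * w (uI j)
     - x (tI i) * y (uI j) * z (uI i) * w (uI j)
     - x (uI j) * y (tI i) * z (uI j) * w (uI i)
     + x (tI i) * y (uI j) * z (uI j) * w (uI i))

/-- `Z_i^+ = U_i + (1/2) V_i`. -/
def Zp {s : ℕ} (i : Fin s) : Vc s := Uv i + (2⁻¹ : ℝ) • Vv i
/-- `Z_i^- = U_i - (1/2) V_i`. -/
def Zm {s : ℕ} (i : Fin s) : Vc s := Uv i - (2⁻¹ : ℝ) • Vv i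

/-- The standard basis vector of `ℝ^{3s}` with index `a`. -/
def stdb {s : ℕ} (a : Ix s) : Vc s := Pi.single a 1

/-- A family `b` indexed by `Ix s` (to be thought of as
`Ũ_1,…,Ũ_s,T̃_1,…,T̃_s,Ṽ_1,…,Ṽ_s`) is *normalized* if it is a basis on which `g` and
`R` take exactly the same values as on the standard basis `U_i, T_i, V_i`; i.e. the
only nonzero values of `g` are `g(Ũ_i,Ṽ_i) = g(Ṽ_i,Ũ_i) = 1`, `g(T̃_i,T̃_i) = -1` and
the only nonzero values of `R`, up to its `ℤ₂`-symmetries, are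
`R(Ũ_i,Ũ_j,Ũ_j,T̃_i) = 1` for `i ≠ j`. -/
def IsNormalizedBasis (s : ℕ) (b : Ix s → Vc s) : Prop :=
  LinearIndependent ℝ b ∧ Submodule.span ℝ (Set.range b) = ⊤ ∧
  (∀ a a' : Ix s, gM s (b a) (b a') = gM s (stdb a) (stdb a')) ∧
  (∀ a₁ a₂ a₃ a₄ : Ix s,
    RM s (b a₁) (b a₂) (b a₃) (b a₄) = RM s (stdb a₁) (stdb a₂) (stdb a₃) (stdb a₄))

/-- `A_V = {W : R(W₁,W₂,W₃,W) = 0 for all W₁,W₂,W₃}`. -/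
def AVset (s : ℕ) : Set (Vc s) := {W | ∀ W₁ W₂ W₃ : Vc s, RM s W₁ W₂ W₃ W = 0}

/-- `A_{T,V} = A_V^⊥ = {W : g(W,W₁) = 0 for all W₁ ∈ A_V}`. -/
def ATVset (s : ℕ) : Set (Vc s) := {W | ∀ W₁ ∈ AVset s, gM s W W₁ = 0}

section Helpers
variable {s : ℕ}

lemma stdb_apply (a a' : Ix s) : stdb a a' = if a' = a then 1 else 0 := Pi.single_apply a 1 a'

lemma rm_add₁ (x x' y z w : Vc s) : RM s (x + x') y z w = RM s x y z w + RM s x' y z w := by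
  simp only [RM, Pi.add_apply, ← Finset.sum_add_distrib]
  exact Finset.sum_congr rfl fun i _ => Finset.sum_congr rfl fun j _ => by ring

lemma rm_smul₁ (c : ℝ) (x y z w : Vc s) : RM s (c • x) y z w = c * RM s x y z w := by
  simp only [RM, Pi.smul_apply, smul_eq_mul, Finset.mul_sum]
  exact Finset.sum_congr rfl fun i _ => Finset.sum_congr rfl fun j _ => by ring

lemma rm_add₂ (x y y' z w : Vc s) : RM s x (y + y') z w = RM s x y z w + RM s x y' z w := by
  simp only [RM, Pi.add_apply, ← Finset.sum_add_distrib]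
  exact Finset.sum_congr rfl fun i _ => Finset.sum_congr rfl fun j _ => by ring

lemma rm_smul₂ (c : ℝ) (x y z w : Vc s) : RM s x (c • y) z w = c * RM s x y z w := by
  simp only [RM, Pi.smul_apply, smul_eq_mul, Finset.mul_sum]
  exact Finset.sum_congr rfl fun i _ => Finset.sum_congr rfl fun j _ => by ring

lemma rm_add₃ (x y z z' w : Vc s) : RM s x y (z + z') w = RM s x y z w + RM s x y z' w := by
  simp only [RM, Pi.add_apply, ← Finset.sum_add_distrib]
  exact Finset.sum_congr rfl fun i _ => Finset.sum_congr rfl fun j _ => by ring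

lemma rm_smul₃ (c : ℝ) (x y z w : Vc s) : RM s x y (c • z) w = c * RM s x y z w := by
  simp only [RM, Pi.smul_apply, smul_eq_mul, Finset.mul_sum]
  exact Finset.sum_congr rfl fun i _ => Finset.sum_congr rfl fun j _ => by ring

lemma rm_w_zero (x y z w : Vc s) (hu : ∀ j, w (uI j) = 0) (ht : ∀ i, w (tI i) = 0) :
    RM s x y z w = 0 := by
  simp [RM, hu, ht]

lemma rm_wu_zero (x y z w : Vc s) (hu : ∀ j, w (uI j) = 0) :
    RM s x y z w =
      ∑ m, (∑ j, (x (uI m) * y (uI j) * z (uI j) - x (uI j) * y (uI m) * z (uI j))) * w (tI m) := by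
  simp only [RM, hu, mul_zero, zero_mul, sub_zero, add_zero, Finset.sum_mul]
  exact Finset.sum_congr rfl fun i _ => Finset.sum_congr rfl fun j _ => by ring

end Helpers
section Helpers2
variable {s : ℕ}

lemma rm_UTU (i j : Fin s) (hij : i ≠ j) (w : Vc s) :
    RM s (stdb (uI j)) (stdb (tI i)) (stdb (uI i)) w = w (uI j) := by
  simp [RM, stdb_apply, uI, tI, vI, hij, Ne.symm hij, mul_ite, ite_mul,
    Finset.sum_ite_eq, Finset.sum_ite_eq']

lemma rm_UUU (i j : Fin s) (hij : i ≠ j) (w : Vc s) :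
    RM s (stdb (uI i)) (stdb (uI j)) (stdb (uI j)) w = w (tI i) := by
  simp [RM, stdb_apply, uI, tI, vI, hij, Ne.symm hij, mul_ite, ite_mul,
    Finset.sum_ite_eq, Finset.sum_ite_eq']

end Helpers2
section Helpers3
variable {s : ℕ}

lemma exists_ne_fin (hs : 2 ≤ s) (j : Fin s) : ∃ i : Fin s, i ≠ j := by
  have : Nontrivial (Fin s) := Fin.nontrivial_iff_two_le.mpr hs
  exact exists_ne j

lemma av_comp_u (hs : 2 ≤ s) {W : Vc s} (hW : W ∈ AVset s) (j : Fin s) : W (uI j) = 0 := by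
  obtain ⟨i, hij⟩ := exists_ne_fin hs j
  have := hW (stdb (uI j)) (stdb (tI i)) (stdb (uI i))
  rwa [rm_UTU i j hij] at this

lemma av_comp_t (hs : 2 ≤ s) {W : Vc s} (hW : W ∈ AVset s) (i : Fin s) : W (tI i) = 0 := by
  obtain ⟨j, hji⟩ := exists_ne_fin hs i
  have := hW (stdb (uI i)) (stdb (uI j)) (stdb (uI j))
  rwa [rm_UUU i j (Ne.symm hji)] at this

lemma stdb_v_mem_av (m : Fin s) : stdb (vI m) ∈ AVset s := by
  intro x y z
  apply rm_w_zero
  · intro j; simp [stdb_apply, uI, vI]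
  · intro i; simp [stdb_apply, tI, vI]

lemma atv_comp_u {W : Vc s} (hW : W ∈ ATVset s) (m : Fin s) : W (uI m) = 0 := by
  have := hW (stdb (vI m)) (stdb_v_mem_av m)
  rw [gM] at this
  rw [Finset.sum_eq_single m] at this
  · simpa [stdb_apply, uI, tI, vI] using this
  · intro c _ hc
    simp [stdb_apply, uI, tI, vI, hc]
  · simp

lemma mem_atv_of_u_zero (hs : 2 ≤ s) {W : Vc s} (h : ∀ m, W (uI m) = 0) : W ∈ ATVset s := by
  intro W₁ hW₁
  rw [gM]
  apply Finset.sum_eq_zero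
  intro i _
  rw [h i, av_comp_u hs hW₁ i, av_comp_t hs hW₁ i]
  ring

lemma rm_zero_of_basis {b : Ix s → Vc s} (hspan : Submodule.span ℝ (Set.range b) = ⊤)
    {W : Vc s} (h : ∀ α₁ α₂ α₃ : Ix s, RM s (b α₁) (b α₂) (b α₃) W = 0) :
    ∀ x y z : Vc s, RM s x y z W = 0 := by
  have mem : ∀ v : Vc s, v ∈ Submodule.span ℝ (Set.range b) := by
    intro v; rw [hspan]; trivial
  have h3 : ∀ α₁ α₂ : Ix s, ∀ z : Vc s, RM s (b α₁) (b α₂) z W = 0 := by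
    intro α₁ α₂ z
    induction mem z using Submodule.span_induction with
    | mem v hv => obtain ⟨α₃, rfl⟩ := hv; exact h α₁ α₂ α₃
    | zero =>
        have := rm_smul₃ (s := s) 0 (b α₁) (b α₂) 0 W
        simpa using this
    | add u v _ _ hu hv => rw [rm_add₃, hu, hv, add_zero]
    | smul c u _ hu => rw [rm_smul₃, hu, mul_zero]
  have h2 : ∀ α₁ : Ix s, ∀ y z : Vc s, RM s (b α₁) y z W = 0 := by
    intro α₁ y z
    induction mem y using Submodule.span_induction with
    | mem v hv => obtain ⟨α₂, rfl⟩ := hv; exact h3 α₁ α₂ z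
    | zero =>
        have := rm_smul₂ (s := s) 0 (b α₁) 0 z W
        simpa using this
    | add u v _ _ hu hv => rw [rm_add₂, hu, hv, add_zero]
    | smul c u _ hu => rw [rm_smul₂, hu, mul_zero]
  intro x y z
  induction mem x using Submodule.span_induction with
  | mem v hv => obtain ⟨α₁, rfl⟩ := hv; exact h2 α₁ y z
  | zero =>
      have := rm_smul₁ (s := s) 0 0 y z W
      simpa using this
  | add u v _ _ hu hv => rw [rm_add₁, hu, hv, add_zero]
  | smul c u _ hu => rw [rm_smul₁, hu, mul_zero]

end Helpers3
section Helpers4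
variable {s : ℕ}

lemma gM_std (a a' : Ix s) : gM s (stdb a) (stdb a') =
    ∑ i, ((if uI i = a then 1 else 0) * (if vI i = a' then 1 else 0)
      + (if vI i = a then 1 else 0) * (if uI i = a' then 1 else 0)
      - (if tI i = a then 1 else 0) * (if tI i = a' then 1 else 0)) := by
  simp [gM, stdb_apply]

lemma vcomp (hs : 2 ≤ s) {b : Ix s → Vc s} (hb : IsNormalizedBasis s b) (m : Fin s) :
    (∀ j, b (vI m) (uI j) = 0) ∧ (∀ i, b (vI m) (tI i) = 0) := by
  obtain ⟨-, hspan, -, hR⟩ := hb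
  have hmem : b (vI m) ∈ AVset s := by
    intro x y z
    refine rm_zero_of_basis hspan (fun α₁ α₂ α₃ => ?_) x y z
    rw [hR]
    apply rm_w_zero
    · intro j; simp [stdb_apply, uI, vI]
    · intro i; simp [stdb_apply, tI, vI]
  exact ⟨av_comp_u hs hmem, av_comp_t hs hmem⟩

lemma gquad (hs : 2 ≤ s) {b : Ix s → Vc s} (hb : IsNormalizedBasis s b) :
    (∀ k m : Fin s, (∑ n, b (uI k) (uI n) * b (vI m) (vI n)) = if k = m then 1 else 0) ∧
    (∀ i m : Fin s, (∑ n, b (tI i) (uI n) * b (vI m) (vI n)) = 0) ∧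
    (∀ i m : Fin s, (∑ n, b (vI i) (uI n) * b (vI m) (vI n)) = 0) := by
  have hg := hb.2.2.1
  have hv := fun m => vcomp hs hb m
  refine ⟨fun k m => ?_, fun i m => ?_, fun i m => ?_⟩
  · have := hg (uI k) (vI m)
    rw [gM, gM_std] at this
    simp only [(hv m).1, (hv m).2, mul_zero, zero_mul, add_zero, sub_zero] at this
    rw [this]
    simp [uI, tI, vI, eq_comm]
  · have := hg (tI i) (vI m)
    rw [gM, gM_std] at this
    simp only [(hv m).1, (hv m).2, mul_zero, zero_mul, add_zero, sub_zero] at this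
    rw [this]
    simp [uI, tI, vI, eq_comm]
  · have := hg (vI i) (vI m)
    rw [gM, gM_std] at this
    simp only [(hv m).1, (hv m).2, mul_zero, zero_mul, add_zero, sub_zero] at this
    rw [this]
    simp [uI, tI, vI, eq_comm]

end Helpers4
section Helpers5
variable {s : ℕ}
open Matrix

lemma tu_zero (hs : 2 ≤ s) {b : Ix s → Vc s} (hb : IsNormalizedBasis s b) :
    ∀ i n : Fin s, b (tI i) (uI n) = 0 := by
  obtain ⟨h1, h2, h3⟩ := gquad hs hb
  set A : Matrix (Fin s) (Fin s) ℝ := Matrix.of fun k n => b (uI k) (uI n) with hA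
  set E : Matrix (Fin s) (Fin s) ℝ := Matrix.of fun m n => b (vI m) (vI n) with hE
  set Tu : Matrix (Fin s) (Fin s) ℝ := Matrix.of fun i n => b (tI i) (uI n) with hTu
  have hAE : A * Eᵀ = 1 := by
    ext k m
    simp [Matrix.mul_apply, Matrix.transpose_apply, hA, hE, h1, Matrix.one_apply]
  have hTE : Tu * Eᵀ = 0 := by
    ext i m
    simp [Matrix.mul_apply, Matrix.transpose_apply, hTu, hE, h2]
  have hEA : Eᵀ * A = 1 := mul_eq_one_comm.mp hAE
  have : Tu = 0 := by
    calc Tu = Tu * (Eᵀ * A) := by rw [hEA, Matrix.mul_one]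
    _ = (Tu * Eᵀ) * A := by rw [Matrix.mul_assoc]
    _ = 0 := by rw [hTE, Matrix.zero_mul]
  intro i n
  have := congrFun (congrFun this i) n
  simpa [hTu] using this

lemma gg_one (hs : 2 ≤ s) {b : Ix s → Vc s} (hb : IsNormalizedBasis s b) :
    ∀ i j : Fin s, (∑ n, b (tI i) (tI n) * b (tI j) (tI n)) = if i = j then 1 else 0 := by
  intro i j
  have := hb.2.2.1 (tI i) (tI j)
  rw [gM, gM_std] at this
  simp only [tu_zero hs hb, zero_mul, mul_zero, add_zero, zero_add, zero_sub] at this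
  rw [Finset.sum_neg_distrib] at this
  have h2 : (∑ i_1 : Fin s,
      ((((if uI i_1 = tI i then 1 else 0) * if vI i_1 = tI j then 1 else 0 : ℝ) +
          (if vI i_1 = tI i then 1 else 0) * if uI i_1 = tI j then 1 else 0) -
        (if tI i_1 = tI i then 1 else 0) * if tI i_1 = tI j then 1 else 0))
      = -(if i = j then 1 else 0) := by
    simp [uI, tI, vI, eq_comm]
  rw [h2] at this
  linarith [this]

end Helpers5
section Helpers6
variable {s : ℕ}

lemma rstar (hs : 2 ≤ s) {b : Ix s → Vc s} (hb : IsNormalizedBasis s b) :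
    ∀ k l i : Fin s,
      (∑ m, (b (uI k) (uI m) * (∑ j, b (uI l) (uI j) * b (uI l) (uI j))
        - (∑ j, b (uI k) (uI j) * b (uI l) (uI j)) * b (uI l) (uI m)) * b (tI i) (tI m))
      = (if k = i then 1 else 0) - (if k = l then 1 else 0) * (if l = i then 1 else 0) := by
  intro k l i
  have hR := hb.2.2.2 (uI k) (uI l) (uI l) (tI i)
  rw [rm_wu_zero _ _ _ _ (fun j => tu_zero hs hb i j)] at hR
  rw [rm_wu_zero _ _ _ _ (fun j => by simp [stdb_apply, uI, tI])] at hR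
  have hrhs : (∑ m, (∑ j, (stdb (uI k) (uI m) * stdb (uI l) (uI j) * stdb (uI l) (uI j)
      - stdb (uI k) (uI j) * stdb (uI l) (uI m) * stdb (uI l) (uI j))) * stdb (tI i) (tI m))
      = (if k = i then 1 else 0) - (if k = l then 1 else 0) * (if l = i then 1 else 0) := by
    simp [stdb_apply, uI, tI, mul_ite, ite_mul, Finset.sum_ite_eq, Finset.sum_ite_eq',
      Finset.sum_sub_distrib, eq_comm]
  rw [hrhs] at hR
  rw [← hR]
  apply Finset.sum_congr rfl
  intro m _
  congr 1
  rw [Finset.sum_sub_distrib, Finset.mul_sum, Finset.sum_mul]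
  congr 1
  · exact Finset.sum_congr rfl fun j _ => by ring
  · exact Finset.sum_congr rfl fun j _ => by ring

lemma grow (hs : 2 ≤ s) {b : Ix s → Vc s} (hb : IsNormalizedBasis s b)
    {k l : Fin s} (hkl : k ≠ l) :
    ∀ m : Fin s, b (uI k) (uI m) * (∑ j, b (uI l) (uI j) * b (uI l) (uI j))
      - (∑ j, b (uI k) (uI j) * b (uI l) (uI j)) * b (uI l) (uI m) = b (tI k) (tI m) := by
  -- uses Gᵀ G = 1
  open Matrix in
  have hGG : (Matrix.of fun i n => b (tI i) (tI n)) * (Matrix.of fun i n => b (tI i) (tI n))ᵀ = 1 := by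
    ext i j
    simp [Matrix.mul_apply, Matrix.transpose_apply, gg_one hs hb i j, Matrix.one_apply]
  have hGtG := mul_eq_one_comm.mp hGG
  have hGtG' : ∀ m m' : Fin s, (∑ i, b (tI i) (tI m) * b (tI i) (tI m')) = if m = m' then 1 else 0 := by
    intro m m'
    have := congrFun (congrFun hGtG m) m'
    simpa [Matrix.mul_apply, Matrix.transpose_apply, Matrix.one_apply] using this
  intro m
  set M : Fin s → ℝ := fun m' => b (uI k) (uI m') * (∑ j, b (uI l) (uI j) * b (uI l) (uI j))
      - (∑ j, b (uI k) (uI j) * b (uI l) (uI j)) * b (uI l) (uI m') with hM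
  have key : ∀ i, (∑ m', M m' * b (tI i) (tI m')) = if k = i then 1 else 0 := by
    intro i
    have := rstar hs hb k l i
    simp only [if_neg hkl, zero_mul, sub_zero] at this
    rw [← this]
  calc M m = ∑ m', M m' * (if m' = m then 1 else 0) := by simp
    _ = ∑ m', M m' * (∑ i, b (tI i) (tI m') * b (tI i) (tI m)) := by
        exact Finset.sum_congr rfl fun m' _ => by rw [hGtG' m' m]
    _ = ∑ m', ∑ i, M m' * b (tI i) (tI m') * b (tI i) (tI m) := by
        apply Finset.sum_congr rfl; intro m' _
        rw [Finset.mul_sum]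
        exact Finset.sum_congr rfl fun i _ => by ring
    _ = ∑ i, ∑ m', M m' * b (tI i) (tI m') * b (tI i) (tI m) := Finset.sum_comm
    _ = ∑ i, (∑ m', M m' * b (tI i) (tI m')) * b (tI i) (tI m) := by
        apply Finset.sum_congr rfl; intro i _
        rw [Finset.sum_mul]
    _ = ∑ i, (if k = i then 1 else 0) * b (tI i) (tI m) := by
        exact Finset.sum_congr rfl fun i _ => by rw [key i]
    _ = b (tI k) (tI m) := by simp
end Helpers6
section Helpers7
variable {s : ℕ}

lemma uu_pair (hs : 2 ≤ s) {b : Ix s → Vc s} (hb : IsNormalizedBasis s b)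
    {k l : Fin s} (hkl : k ≠ l) :
    (∑ m, b (uI k) (uI m) * b (uI k) (uI m)) = 1 ∧
    (∑ m, b (uI k) (uI m) * b (uI l) (uI m)) = 0 := by
  set α := ∑ m, b (uI k) (uI m) * b (uI k) (uI m) with hα
  set β := ∑ m, b (uI l) (uI m) * b (uI l) (uI m) with hβ
  set c := ∑ m, b (uI k) (uI m) * b (uI l) (uI m) with hc
  have hc' : (∑ m, b (uI l) (uI m) * b (uI k) (uI m)) = c := by
    rw [hc]; exact Finset.sum_congr rfl fun m _ => by ring
  have hgk := grow hs hb hkl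
  have hgl := grow hs hb (Ne.symm hkl)
  rw [hc'] at hgl
  have sum_expand : ∀ (p q r t : ℝ) (f g : Fin s → ℝ),
      (∑ m, (f m * p - q * g m) * (f m * r - t * g m)) =
        p * r * (∑ m, f m * f m) - (p * t + q * r) * (∑ m, f m * g m)
          + q * t * (∑ m, g m * g m) := by
    intro p q r t f g
    rw [Finset.mul_sum, Finset.mul_sum, Finset.mul_sum, ← Finset.sum_sub_distrib,
      ← Finset.sum_add_distrib]
    exact Finset.sum_congr rfl fun m _ => by ring
  have sum_expand2 : ∀ (p q r t : ℝ) (f g : Fin s → ℝ),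
      (∑ m, (f m * p - q * g m) * (g m * r - t * f m)) =
        p * r * (∑ m, f m * g m) - p * t * (∑ m, f m * f m)
          - q * r * (∑ m, g m * g m) + q * t * (∑ m, f m * g m) := by
    intro p q r t f g
    rw [Finset.mul_sum, Finset.mul_sum, Finset.mul_sum, Finset.mul_sum,
      ← Finset.sum_sub_distrib, ← Finset.sum_sub_distrib, ← Finset.sum_add_distrib]
    exact Finset.sum_congr rfl fun m _ => by ring
  have E1 : β * β * α - (β * c + c * β) * c + c * c * β = 1 := by
    have h1 := gg_one hs hb k k
    rw [if_pos rfl] at h1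
    rw [← h1]
    rw [show (∑ m, b (tI k) (tI m) * b (tI k) (tI m))
        = ∑ m, (b (uI k) (uI m) * β - c * b (uI l) (uI m))
            * (b (uI k) (uI m) * β - c * b (uI l) (uI m)) from
      Finset.sum_congr rfl fun m _ => by rw [hgk m]]
    rw [sum_expand]
  have E2 : α * α * β - (α * c + c * α) * c + c * c * α = 1 := by
    have h1 := gg_one hs hb l l
    rw [if_pos rfl] at h1
    rw [← h1]
    rw [show (∑ m, b (tI l) (tI m) * b (tI l) (tI m))
        = ∑ m, (b (uI l) (uI m) * α - c * b (uI k) (uI m))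
            * (b (uI l) (uI m) * α - c * b (uI k) (uI m)) from
      Finset.sum_congr rfl fun m _ => by rw [hgl m]]
    rw [sum_expand, hc']
  have E3 : β * α * c - β * c * α - c * α * β + c * c * c = 0 := by
    have h1 := gg_one hs hb k l
    rw [if_neg hkl] at h1
    rw [← h1]
    rw [show (∑ m, b (tI k) (tI m) * b (tI l) (tI m))
        = ∑ m, (b (uI k) (uI m) * β - c * b (uI l) (uI m))
            * (b (uI l) (uI m) * α - c * b (uI k) (uI m)) from
      Finset.sum_congr rfl fun m _ => by rw [hgk m, hgl m]]
    rw [sum_expand2, hα, hβ, hc]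
  have hc0 : c = 0 := by
    have hfact : c * (c * c - α * β) = 0 := by linear_combination E3
    rcases mul_eq_zero.mp hfact with h | h
    · exact h
    · exfalso
      have : (0 : ℝ) = 1 := by linear_combination E1 + β * h
      norm_num at this
  rw [hc0] at E1 E2
  have E1' : β * β * α = 1 := by linarith [E1]
  have E2' : α * α * β = 1 := by linarith [E2]
  have hcube : (α * β) * (α * β) * (α * β) = 1 := by
    linear_combination (α * α * β) * E1' + E2'
  have hab : α * β = 1 := by
    nlinarith [hcube, sq_nonneg (α * β - 1), sq_nonneg (α * β + 1)]
  have hβ1 : β = 1 := by linear_combination E1' - β * hab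
  have hα1 : α = 1 := by linear_combination hab - α * hβ1
  exact ⟨hα1, hc0⟩

lemma uu_one (hs : 2 ≤ s) {b : Ix s → Vc s} (hb : IsNormalizedBasis s b) :
    ∀ k l : Fin s, (∑ m, b (uI k) (uI m) * b (uI l) (uI m)) = if k = l then 1 else 0 := by
  intro k l
  by_cases hkl : k = l
  · subst hkl
    obtain ⟨l', hl'⟩ := exists_ne_fin hs k
    rw [if_pos rfl]
    exact (uu_pair hs hb (Ne.symm hl')).1
  · rw [if_neg hkl]
    exact (uu_pair hs hb hkl).2

end Helpers7

section Final
open Matrix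

/-- for any two normalized bases `B = {U_i,T_i,V_i}` and
`B̃ = {Ũ_i,T̃_i,Ṽ_i}`, the inner product on `ℝ^{3s}/A_{T,V}` obtained by declaring
the projections of the `U_i` orthonormal coincides with the one obtained from the
`Ũ_i`; equivalently, any matrix `a` expressing `σ_U(Ũ_j) = Σ_k a_{jk} σ_U(U_k)`
(i.e. with `Ũ_j - Σ_k a_{jk} U_k ∈ A_{T,V}` for all `j`) is orthogonal.  Such a
matrix exists. -/
theorem stmt14 (s : ℕ) (hs : 2 ≤ s)
    (b btil : Ix s → Vc s)
    (hb : IsNormalizedBasis s b) (hbtil : IsNormalizedBasis s btil) :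
    (∃ a : Matrix (Fin s) (Fin s) ℝ,
      ∀ j : Fin s, btil (uI j) - ∑ k, a j k • b (uI k) ∈ ATVset s) ∧
    (∀ a : Matrix (Fin s) (Fin s) ℝ,
      (∀ j : Fin s, btil (uI j) - ∑ k, a j k • b (uI k) ∈ ATVset s) →
      ∀ k l : Fin s, (∑ j, a j k * a j l) = if k = l then 1 else 0) := by
  set A : Matrix (Fin s) (Fin s) ℝ := Matrix.of fun k m => b (uI k) (uI m) with hA
  set At : Matrix (Fin s) (Fin s) ℝ := Matrix.of fun k m => btil (uI k) (uI m) with hAt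
  have hAA : A * Aᵀ = 1 := by
    ext k l
    simp [hA, Matrix.mul_apply, Matrix.transpose_apply, Matrix.one_apply, uu_one hs hb k l]
  have hAtAt : At * Atᵀ = 1 := by
    ext k l
    simp [hAt, Matrix.mul_apply, Matrix.transpose_apply, Matrix.one_apply, uu_one hs hbtil k l]
  have hAc : Aᵀ * A = 1 := mul_eq_one_comm.mp hAA
  have hAtc : Atᵀ * At = 1 := mul_eq_one_comm.mp hAtAt
  have hmem_iff : ∀ (a : Matrix (Fin s) (Fin s) ℝ) (j : Fin s),
      (∀ m, btil (uI j) (uI m) = ∑ k, a j k * b (uI k) (uI m)) →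
      btil (uI j) - ∑ k, a j k • b (uI k) ∈ ATVset s := by
    intro a j h
    apply mem_atv_of_u_zero hs
    intro m
    simp only [Pi.sub_apply, Finset.sum_apply, Pi.smul_apply, smul_eq_mul]
    rw [← h m, sub_self]
  constructor
  · refine ⟨At * Aᵀ, fun j => hmem_iff _ j fun m => ?_⟩
    have key : (At * Aᵀ) * A = At := by rw [Matrix.mul_assoc, hAc, Matrix.mul_one]
    have := congrFun (congrFun key j) m
    rw [Matrix.mul_apply] at this
    simpa [hA, hAt] using this.symm
  · intro a hmem k l
    have haA : a * A = At := by
      ext j m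
      have h0 : (btil (uI j) - ∑ k, a j k • b (uI k)) (uI m) = 0 :=
        atv_comp_u (hmem j) m
      simp only [Pi.sub_apply, Finset.sum_apply, Pi.smul_apply, smul_eq_mul,
        sub_eq_zero] at h0
      simp [Matrix.mul_apply, hA, hAt, h0.symm]
    have ha : a = At * Aᵀ := by
      calc a = a * (A * Aᵀ) := by rw [hAA, Matrix.mul_one]
        _ = (a * A) * Aᵀ := by rw [Matrix.mul_assoc]
        _ = At * Aᵀ := by rw [haA]
    have haTa : aᵀ * a = 1 := by
      rw [ha, Matrix.transpose_mul, Matrix.transpose_transpose, Matrix.mul_assoc,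
        ← Matrix.mul_assoc Atᵀ At Aᵀ, hAtc, Matrix.one_mul, hAA]
    have := congrFun (congrFun haTa k) l
    rw [Matrix.mul_apply] at this
    simpa [Matrix.transpose_apply, Matrix.one_apply] using this

end Final
end
end

section
/- The manifold (M_F, g_F) is curvature homogeneous with model V_{3s}, in the following pointwise algebraic sense: for every point P = (u, t, v) ∈ ℝ^{3s}, there exists a linear isomorphism Ψ : ℝ^{3s} → ℝ^{3s} such that g(Ψx, Ψy) = g_P(x, y) and R(Ψx, Ψy, Ψz, Ψw) = R_P(x, y, z, w) for all x, y, z, w ∈ ℝ^{3s}. Concretely, with ε_i := −(1/2)f_i''(u_i) − (1/4)|u|² and ρ_i := (1/2)(ε_i² − g_P(∂_i^u, ∂_i^u)), the vectors Û_i := ∂_i^u + ε_i ∂_i^t + ρ_i ∂_i^v, T̂_i := ∂_i^t + ε_i ∂_i^v, V̂_i := ∂_i^v form a basis of ℝ^{3s} on which the only nonzero values of g_P are g_P(Û_i, V̂_i) = 1 and g_P(T̂_i, T̂_i) = −1, and the only nonzero values of R_P up to its ℤ₂-symmetries are R_P(Û_i, Û_j, Û_j, T̂_i) = 1 for i ≠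 j. -/
open scoped BigOperators

noncomputable section

/-- `F(u) = f_1(u_1) + … + f_s(u_s)`. -/
def FF (s : ℕ) (f : Fin s → ℝ → ℝ) (u : Fin s → ℝ) : ℝ := ∑ i, f i (u i)

/-- The metric `g_F` of the manifold `(M_F, g_F)` at the point `P = (u,t,v)` of
`ℝ^{3s}`: the only nonzero entries on the coordinate vector fields are
`g_F(∂_i^u,∂_i^u) = -2F(u) - 2 u·t`, `g_F(∂_i^u,∂_i^v) = g_F(∂_i^v,∂_i^u) = 1` and
`g_F(∂_i^t,∂_i^t) = -1`. -/
def gFP (s : ℕ) (f : Fin s → ℝ → ℝ) (P : Vc s) (x y : Vc s) : ℝ :=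
  ∑ i, ((-2 * FF s f (fun k => P (uI k)) - 2 * ∑ k, P (uI k) * P (tI k))
        * (x (uI i) * y (uI i))
        + x (uI i) * y (vI i) + x (vI i) * y (uI i) - x (tI i) * y (tI i))

/-- The 4-linear form `R_P` on `ℝ^{3s}` (the curvature tensor of `(M_F,g_F)` at a
point over `u ∈ ℝ^s`), determined by the `ℤ₂`-symmetries
`R(x,y,z,w) = R(z,w,x,y) = -R(y,x,z,w)` and whose only nonzero values on the
coordinate basis, up to those symmetries, are
`R(∂_i^u,∂_j^u,∂_j^u,∂_i^u) = f_i''(u_i) + f_j''(u_j) + |u|²` and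
`R(∂_i^u,∂_j^u,∂_j^u,∂_i^t) = 1` for `i ≠ j`. -/
def RP (s : ℕ) (f : Fin s → ℝ → ℝ) (u : Fin s → ℝ) (x y z w : Vc s) : ℝ :=
  (∑ i, ∑ j,
    (x (uI i) * y (uI j) * z (uI j) * w (tI i)
     - x (uI j) * y (uI i) * z (uI j) * w (tI i)
     - x (uI i) * y (uI j) * z (tI i) * w (uI j)
     + x (uI j) * y (uI i) * z (tI i) * w (uI j)
     + x (uI j) * y (tI i) * z (uI i) * w (uI j)
     - x (tI i) * y (uI j) * z (uI i) * w (uI j)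
     - x (uI j) * y (tI i) * z (uI j) * w (uI i)
     + x (tI i) * y (uI j) * z (uI j) * w (uI i)))
  + ∑ i, ∑ j,
      (deriv (deriv (f i)) (u i) + deriv (deriv (f j)) (u j) + ∑ k, u k ^ 2) *
      (x (uI i) * y (uI j) * z (uI j) * w (uI i)
       - x (uI i) * y (uI j) * z (uI i) * w (uI j))

/-- `ε_i = -(1/2) f_i''(u_i) - (1/4)|u|²`. -/
def epsC (s : ℕ) (f : Fin s → ℝ → ℝ) (u : Fin s → ℝ) (i : Fin s) : ℝ :=
  -(2⁻¹ : ℝ) * deriv (deriv (f i)) (u i) - (4⁻¹ : ℝ) * ∑ k, u k ^ 2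

/-- `ρ_i = (1/2)(ε_i² - g_P(∂_i^u,∂_i^u))`. -/
def rhoC (s : ℕ) (f : Fin s → ℝ → ℝ) (u t : Fin s → ℝ) (i : Fin s) : ℝ :=
  (2⁻¹ : ℝ) * ((epsC s f u i) ^ 2 - (-2 * FF s f u - 2 * ∑ k, u k * t k))

/-- The adjusted basis `Û_i = ∂_i^u + ε_i ∂_i^t + ρ_i ∂_i^v`,
`T̂_i = ∂_i^t + ε_i ∂_i^v`, `V̂_i = ∂_i^v`. -/
def hatb (s : ℕ) (f : Fin s → ℝ → ℝ) (u t : Fin s → ℝ) : Ix s → Vc s :=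
  Sum.elim (fun i => Uv i + epsC s f u i • Tv i + rhoC s f u t i • Vv i)
    (Sum.elim (fun i => Tv i + epsC s f u i • Vv i) (fun i => Vv i))

/-! ### Auxiliary definitions and lemmas for `stmt16` -/

/-- The linear change of coordinates sending `∂_a` to `hatb a`, as a raw function. -/
def psiFun (s : ℕ) (f : Fin s → ℝ → ℝ) (u t : Fin s → ℝ) (x : Vc s) : Vc s :=
  Sum.elim (fun i => x (uI i))
    (Sum.elim (fun i => x (tI i) + epsC s f u i * x (uI i))
      (fun i => x (vI i) + epsC s f u i * x (tI i) + rhoC s f u t i * x (uI i)))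

/-- The inverse change of coordinates. -/
def psiInvFun (s : ℕ) (f : Fin s → ℝ → ℝ) (u t : Fin s → ℝ) (x : Vc s) : Vc s :=
  Sum.elim (fun i => x (uI i))
    (Sum.elim (fun i => x (tI i) - epsC s f u i * x (uI i))
      (fun i => x (vI i) - epsC s f u i * x (tI i)
        + (epsC s f u i ^ 2 - rhoC s f u t i) * x (uI i)))

/-- The linear isomorphism sending `∂_a` to `hatb a`. -/
def psiEquiv (s : ℕ) (f : Fin s → ℝ → ℝ) (u t : Fin s → ℝ) : Vc s ≃ₗ[ℝ] Vc s where
  toFun := psiFun s f u t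
  invFun := psiInvFun s f u t
  map_add' x y := by
    funext a
    rcases a with i | i | i <;>
      simp only [psiFun, uI, tI, vI, Sum.elim_inl, Sum.elim_inr, Pi.add_apply] <;> ring
  map_smul' c x := by
    funext a
    rcases a with i | i | i <;>
      simp only [psiFun, uI, tI, vI, Sum.elim_inl, Sum.elim_inr, Pi.smul_apply,
        smul_eq_mul, RingHom.id_apply] <;> ring
  left_inv x := by
    funext a
    rcases a with i | i | i <;>
      simp only [psiFun, psiInvFun, uI, tI, vI, Sum.elim_inl, Sum.elim_inr] <;> ring
  right_inv x := by
    funext a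
    rcases a with i | i | i <;>
      simp only [psiFun, psiInvFun, uI, tI, vI, Sum.elim_inl, Sum.elim_inr] <;> ring

lemma hatb_eq_psi (s : ℕ) (f : Fin s → ℝ → ℝ) (u t : Fin s → ℝ) (a : Ix s) :
    hatb s f u t a = psiFun s f u t (stdb a) := by
  rcases a with i | i | i <;> (funext b; rcases b with k | k | k) <;>
    simp [hatb, psiFun, stdb, Uv, Tv, Vv, uI, tI, vI, Pi.single_apply] <;>
    rcases eq_or_ne k i with h | h <;> simp [h]

lemma key_g (s : ℕ) (f : Fin s → ℝ → ℝ) (u t v : Fin s → ℝ) (x y : Vc s) :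
    gFP s f (Sum.elim u (Sum.elim t v)) (psiFun s f u t x) (psiFun s f u t y) =
      gM s x y := by
  unfold gFP gM psiFun
  refine Finset.sum_congr rfl fun i _ => ?_
  simp only [uI, tI, vI, Sum.elim_inl, Sum.elim_inr]
  have hF : FF s f (fun k => u k) = FF s f u := rfl
  rw [hF]
  unfold rhoC
  ring

lemma key_R (s : ℕ) (f : Fin s → ℝ → ℝ) (u t : Fin s → ℝ) (x y z w : Vc s) :
    RP s f u (psiFun s f u t x) (psiFun s f u t y) (psiFun s f u t z)
        (psiFun s f u t w) = RM s x y z w := by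
  set c : Fin s → Fin s → ℝ := fun i j =>
    2 * epsC s f u i *
      (x (uI i) * y (uI j) * z (uI j) * w (uI i)
       + x (uI j) * y (uI i) * z (uI i) * w (uI j)
       - x (uI i) * y (uI j) * z (uI i) * w (uI j)
       - x (uI j) * y (uI i) * z (uI j) * w (uI i))
    + (deriv (deriv (f i)) (u i) + deriv (deriv (f j)) (u j) + ∑ k, u k ^ 2) *
      (x (uI i) * y (uI j) * z (uI j) * w (uI i)
       - x (uI i) * y (uI j) * z (uI i) * w (uI j)) with hc
  have hsum : RP s f u (psiFun s f u t x) (psiFun s f u t y) (psiFun s f u t z)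
      (psiFun s f u t w) = RM s x y z w + ∑ i, ∑ j, c i j := by
    unfold RP RM psiFun
    rw [← Finset.sum_add_distrib, ← Finset.sum_add_distrib]
    refine Finset.sum_congr rfl fun i _ => ?_
    rw [← Finset.sum_add_distrib, ← Finset.sum_add_distrib]
    refine Finset.sum_congr rfl fun j _ => ?_
    simp only [hc, uI, tI, Sum.elim_inl, Sum.elim_inr]
    ring
  have hskew : ∀ i j : Fin s, c i j + c j i = 0 := by
    intro i j
    simp only [hc, epsC]
    ring
  have hzero : (∑ i, ∑ j, c i j) = 0 := by
    have h2 : (∑ i : Fin s, ∑ j : Fin s, (c i j + c j i)) = 0 :=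
      Finset.sum_eq_zero fun i _ => Finset.sum_eq_zero fun j _ => hskew i j
    have h3 : (∑ i : Fin s, ∑ j : Fin s, (c i j + c j i)) =
        (∑ i, ∑ j, c i j) + (∑ i, ∑ j, c j i) := by
      simp [Finset.sum_add_distrib]
    have h4 : (∑ i : Fin s, ∑ j : Fin s, c j i) = ∑ i, ∑ j, c i j := Finset.sum_comm
    linarith
  rw [hsum, hzero, add_zero]

/-- `(M_F,g_F)` is curvature homogeneous with model `V_{3s}` in the
pointwise algebraic sense: at every point `P = (u,t,v)` the adjusted vectors
`Û_i, T̂_i, V̂_i` form a basis of `ℝ^{3s}` on which `g_P` and `R_P` take exactly the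
model values (`g_P(Û_i,V̂_i) = 1`, `g_P(T̂_i,T̂_i) = -1`, `R_P(Û_i,Û_j,Û_j,T̂_i) = 1`
for `i ≠ j`, all other values zero up to the `ℤ₂`-symmetries); hence there is a
linear isomorphism `Ψ` of `ℝ^{3s}` with `g(Ψx,Ψy) = g_P(x,y)` and
`R(Ψx,Ψy,Ψz,Ψw) = R_P(x,y,z,w)`. -/
theorem stmt16 (s : ℕ) (hs : 2 ≤ s)
    (f : Fin s → ℝ → ℝ) (hf : ∀ i, ContDiff ℝ (⊤ : ℕ∞) (f i))
    (u t v : Fin s → ℝ) :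
    LinearIndependent ℝ (hatb s f u t) ∧
    Submodule.span ℝ (Set.range (hatb s f u t)) = ⊤ ∧
    (∀ a b : Ix s,
      gFP s f (Sum.elim u (Sum.elim t v)) (hatb s f u t a) (hatb s f u t b) =
        gM s (stdb a) (stdb b)) ∧
    (∀ a b c d : Ix s,
      RP s f u (hatb s f u t a) (hatb s f u t b) (hatb s f u t c) (hatb s f u t d) =
        RM s (stdb a) (stdb b) (stdb c) (stdb d)) ∧
    (∃ Ψ : Vc s ≃ₗ[ℝ] Vc s,
      (∀ x y : Vc s, gM s (Ψ x) (Ψ y) = gFP s f (Sum.elim u (Sum.elim t v)) x y) ∧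
      (∀ x y z w : Vc s, RM s (Ψ x) (Ψ y) (Ψ z) (Ψ w) = RP s f u x y z w)) := by
  have hb : hatb s f u t = fun a => (psiEquiv s f u t) ((Pi.basisFun ℝ (Ix s)) a) := by
    funext a
    rw [hatb_eq_psi, show ((Pi.basisFun ℝ (Ix s)) a) = stdb a by
      simp [stdb, Pi.basisFun_apply]]
    rfl
  have hstdb : ∀ a : Ix s, stdb a = (Pi.basisFun ℝ (Ix s)) a := by
    intro a; simp [stdb, Pi.basisFun_apply]
  refine ⟨?_, ?_, ?_, ?_, ?_⟩
  · rw [hb]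
    exact (((Pi.basisFun ℝ (Ix s)).map (psiEquiv s f u t)).linearIndependent)
  · rw [hb]
    exact ((Pi.basisFun ℝ (Ix s)).map (psiEquiv s f u t)).span_eq
  · intro a b
    rw [hatb_eq_psi, hatb_eq_psi, key_g]
  · intro a b c d
    rw [hatb_eq_psi, hatb_eq_psi, hatb_eq_psi, hatb_eq_psi, key_R]
  · refine ⟨(psiEquiv s f u t).symm, fun x y => ?_, fun x y z w => ?_⟩
    · have := key_g s f u t v ((psiEquiv s f u t).symm x) ((psiEquiv s f u t).symm y)
      have hx : psiFun s f u t ((psiEquiv s f u t).symm x) = x :=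
        (psiEquiv s f u t).apply_symm_apply x
      have hy : psiFun s f u t ((psiEquiv s f u t).symm y) = y :=
        (psiEquiv s f u t).apply_symm_apply y
      rw [hx, hy] at this
      exact this.symm
    · have := key_R s f u t ((psiEquiv s f u t).symm x) ((psiEquiv s f u t).symm y)
        ((psiEquiv s f u t).symm z) ((psiEquiv s f u t).symm w)
      have hx : psiFun s f u t ((psiEquiv s f u t).symm x) = x :=
        (psiEquiv s f u t).apply_symm_apply x
      have hy : psiFun s f u t ((psiEquiv s f u t).symm y) = y :=
        (psiEquiv s f u t).apply_symm_apply y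
      have hz : psiFun s f u t ((psiEquiv s f u t).symm z) = z :=
        (psiEquiv s f u t).apply_symm_apply z
      have hw : psiFun s f u t ((psiEquiv s f u t).symm w) = w :=
        (psiEquiv s f u t).apply_symm_apply w
      rw [hx, hy, hz, hw] at this
      exact this.symm
end
end

section
/- The explicit connection ∇ is the Levi-Civita connection of g_F: defining ∇ on coordinate vector fields by ∇_{∂_i^u}∂_i^u = −(f_i'(u_i) + t_i)∂_i^v + Σ_{k ≠ i}(f_k'(u_k) + t_k)∂_k^v − Σ_{k=1}^{s} u_k ∂_k^t, ∇_{∂_i^u}∂_j^u = −(f_j'(u_j) + t_j)∂_i^v − (f_i'(u_i) + t_i)∂_j^v for i ≠ j, ∇_{∂_i^u}∂_j^t = ∇_{∂_j^t}∂_i^u = −u_j ∂_i^v (for all i, j, including i = j), and ∇_{∂_a}∂_b = 0 for all other pairs of coordinate vector fields, one has: (i) symmetry, ∇_{∂_a}∂_b = ∇_{∂_b}∂_a for all coordinate fields ∂_a, ∂_b; and (ii) metric compatibility, ∂_a (g_F(∂_b, ∂_c)) = g_F(∇_{∂_a}∂_b, ∂_c) + g_F(∂_b, ∇_{∂_a}∂_c)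 for all coordinate fields ∂_a, ∂_b, ∂_c, where ∂_a acts as the corresponding partial derivative on the function g_F(∂_b, ∂_c). -/
open scoped BigOperators

noncomputable section

/-- The explicit connection `∇` of `(M_F, g_F)` on coordinate vector fields:
`nab a b P` is the value of `∇_{∂_a}∂_b` at the point `P`.  Its nonzero values are
`∇_{∂_i^u}∂_i^u = -(f_i'(u_i)+t_i)∂_i^v + Σ_{k≠i}(f_k'(u_k)+t_k)∂_k^v - Σ_k u_k ∂_k^t`,
`∇_{∂_i^u}∂_j^u = -(f_j'(u_j)+t_j)∂_i^v - (f_i'(u_i)+t_i)∂_j^v` for `i ≠ j`, and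
`∇_{∂_i^u}∂_j^t = ∇_{∂_j^t}∂_i^u = -u_j ∂_i^v`. -/
def nab (s : ℕ) (f : Fin s → ℝ → ℝ) : Ix s → Ix s → Vc s → Vc s
  | Sum.inl i, Sum.inl j => fun P =>
      if i = j then
        (∑ k, ((if k = i then (-1 : ℝ) else 1) * (deriv (f k) (P (uI k)) + P (tI k))) • Vv k)
          - ∑ k, P (uI k) • Tv k
      else
        (-(deriv (f j) (P (uI j)) + P (tI j))) • Vv i
          + (-(deriv (f i) (P (uI i)) + P (tI i))) • Vv j
  | Sum.inl i, Sum.inr (Sum.inl j) => fun P => (-(P (uI j))) • Vv i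
  | Sum.inr (Sum.inl j), Sum.inl i => fun P => (-(P (uI j))) • Vv i
  | _, _ => fun _ => 0


/-! ### Auxiliary machinery -/

def Afun (s : ℕ) (f : Fin s → ℝ → ℝ) (Q : Vc s) : ℝ :=
  -2 * FF s f (fun k => Q (uI k)) - 2 * ∑ k, Q (uI k) * Q (tI k)

variable {s : ℕ} {f : Fin s → ℝ → ℝ} {P x : Vc s}

lemma gFP_eq (s : ℕ) (f : Fin s → ℝ → ℝ) (P x y : Vc s) :
    gFP s f P x y = Afun s f P * (∑ i, x (uI i) * y (uI i))
      + ∑ i, (x (uI i) * y (vI i) + x (vI i) * y (uI i) - x (tI i) * y (tI i)) := by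
  have h : ∀ A : ℝ, ∑ i, (A * (x (uI i) * y (uI i)) + x (uI i) * y (vI i)
      + x (vI i) * y (uI i) - x (tI i) * y (tI i))
      = A * (∑ i, x (uI i) * y (uI i))
        + ∑ i, (x (uI i) * y (vI i) + x (vI i) * y (uI i) - x (tI i) * y (tI i)) := by
    intro A
    rw [Finset.mul_sum, ← Finset.sum_add_distrib]
    exact Finset.sum_congr rfl fun i _ => by ring
  exact h (Afun s f P)

lemma gR_u (k : Fin s) :
    gFP s f P x (stdb (Sum.inl k)) = Afun s f P * x (uI k) + x (vI k) := by
  rw [gFP_eq]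
  simp [stdb, Pi.single_apply, uI, tI, vI, Finset.sum_ite_eq, mul_ite]

lemma gR_t (k : Fin s) :
    gFP s f P x (stdb (Sum.inr (Sum.inl k))) = -(x (tI k)) := by
  rw [gFP_eq]
  simp [stdb, Pi.single_apply, uI, tI, vI, Finset.sum_ite_eq, mul_ite]

lemma gR_v (k : Fin s) :
    gFP s f P x (stdb (Sum.inr (Sum.inr k))) = x (uI k) := by
  rw [gFP_eq]
  simp [stdb, Pi.single_apply, uI, tI, vI, Finset.sum_ite_eq, mul_ite]

lemma gL_u (k : Fin s) :
    gFP s f P (stdb (Sum.inl k)) x = Afun s f P * x (uI k) + x (vI k) := by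
  rw [gFP_eq]
  simp [stdb, Pi.single_apply, uI, tI, vI, Finset.sum_ite_eq, mul_ite, ite_mul]

lemma gL_t (k : Fin s) :
    gFP s f P (stdb (Sum.inr (Sum.inl k))) x = -(x (tI k)) := by
  rw [gFP_eq]
  simp [stdb, Pi.single_apply, uI, tI, vI, Finset.sum_ite_eq, mul_ite, ite_mul]

lemma gL_v (k : Fin s) :
    gFP s f P (stdb (Sum.inr (Sum.inr k))) x = x (uI k) := by
  rw [gFP_eq]
  simp [stdb, Pi.single_apply, uI, tI, vI, Finset.sum_ite_eq, mul_ite, ite_mul]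

def prj {s : ℕ} (a : Ix s) : Vc s →L[ℝ] ℝ := ContinuousLinearMap.proj (R := ℝ) a

def Lm (s : ℕ) (f : Fin s → ℝ → ℝ) (P : Vc s) : Vc s →L[ℝ] ℝ :=
  (-2 : ℝ) • (∑ i, deriv (f i) (P (uI i)) • prj (uI i))
    - (2 : ℝ) • (∑ i, (P (uI i) • prj (tI i) + P (tI i) • prj (uI i)))

lemma Lm_u (m : Fin s) : Lm s f P (stdb (Sum.inl m))
    = -2 * deriv (f m) (P (uI m)) - 2 * P (tI m) := by
  simp [Lm, prj, stdb, Pi.single_apply, uI, tI, vI, Finset.sum_ite_eq',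
    ContinuousLinearMap.sum_apply, mul_comm]

lemma Lm_t (m : Fin s) : Lm s f P (stdb (Sum.inr (Sum.inl m))) = -2 * P (uI m) := by
  simp [Lm, prj, stdb, Pi.single_apply, uI, tI, vI, Finset.sum_ite_eq',
    ContinuousLinearMap.sum_apply, mul_comm]

lemma Lm_v (m : Fin s) : Lm s f P (stdb (Sum.inr (Sum.inr m))) = 0 := by
  simp [Lm, prj, stdb, Pi.single_apply, uI, tI, vI, Finset.sum_ite_eq',
    ContinuousLinearMap.sum_apply]

-- component lemmas for nab (inl i) (inl i)
lemma nab_uu_self_u (i m : Fin s) : nab s f (Sum.inl i) (Sum.inl i) P (Sum.inl m) = 0 := by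
  simp [nab, uI, tI, vI, Uv, Tv, Vv, Pi.single_apply, Finset.sum_apply, ite_apply, smul_ite]

lemma nab_uu_self_v (i m : Fin s) : nab s f (Sum.inl i) (Sum.inl i) P (Sum.inr (Sum.inr m))
    = (if m = i then (-1:ℝ) else 1) * (deriv (f m) (P (Sum.inl m)) + P (Sum.inr (Sum.inl m))) := by
  simp only [nab, uI, tI, vI, Uv, Tv, Vv, if_pos rfl]
  simp [Pi.single_apply, Finset.sum_apply, mul_ite, ite_mul, ite_apply, smul_ite]
  rw [Finset.sum_eq_single m (fun b _ hb => by simp [Ne.symm hb]) (by simp)]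
  split_ifs <;> first | ring1 | simp_all

lemma nab_uu_self_t (i m : Fin s) : nab s f (Sum.inl i) (Sum.inl i) P (Sum.inr (Sum.inl m))
    = -(P (Sum.inl m)) := by
  simp [nab, uI, tI, vI, Uv, Tv, Vv, Pi.single_apply, Finset.sum_apply, mul_ite, ite_mul, ite_apply, smul_ite]

lemma nab_uu_ne_u (i j m : Fin s) (h : i ≠ j) :
    nab s f (Sum.inl i) (Sum.inl j) P (Sum.inl m) = 0 := by
  simp [nab, h, uI, tI, vI, Vv, Pi.single_apply]

lemma nab_uu_ne_t (i j m : Fin s) (h : i ≠ j) :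
    nab s f (Sum.inl i) (Sum.inl j) P (Sum.inr (Sum.inl m)) = 0 := by
  simp [nab, h, uI, tI, vI, Vv, Pi.single_apply]

lemma nab_uu_ne_v (i j m : Fin s) (h : i ≠ j) :
    nab s f (Sum.inl i) (Sum.inl j) P (Sum.inr (Sum.inr m))
      = -(if m = i then deriv (f j) (P (Sum.inl j)) + P (Sum.inr (Sum.inl j)) else 0)
        - (if m = j then deriv (f i) (P (Sum.inl i)) + P (Sum.inr (Sum.inl i)) else 0) := by
  simp [nab, h, uI, tI, vI, Vv, Pi.single_apply, mul_ite]
  split_ifs <;> ring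

lemma nab_ut_u (i j m : Fin s) :
    nab s f (Sum.inl i) (Sum.inr (Sum.inl j)) P (Sum.inl m) = 0 := by
  simp [nab, uI, tI, vI, Vv, Pi.single_apply]

lemma nab_ut_t (i j m : Fin s) :
    nab s f (Sum.inl i) (Sum.inr (Sum.inl j)) P (Sum.inr (Sum.inl m)) = 0 := by
  simp [nab, uI, tI, vI, Vv, Pi.single_apply]

lemma nab_ut_v (i j m : Fin s) :
    nab s f (Sum.inl i) (Sum.inr (Sum.inl j)) P (Sum.inr (Sum.inr m))
      = if m = i then -(P (Sum.inl j)) else 0 := by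
  simp [nab, uI, tI, vI, Vv, Pi.single_apply, mul_ite]

lemma nab_tu (i j : Fin s) :
    nab s f (Sum.inr (Sum.inl j)) (Sum.inl i) = nab s f (Sum.inl i) (Sum.inr (Sum.inl j)) := rfl

lemma nab_vl (i : Fin s) (b : Ix s) : nab s f (Sum.inr (Sum.inr i)) b = fun _ => 0 := by
  rcases b with j | j | j <;> rfl
lemma nab_vr (i : Fin s) (a : Ix s) : nab s f a (Sum.inr (Sum.inr i)) = fun _ => 0 := by
  rcases a with j | j | j <;> rfl
lemma nab_tt' (i j : Fin s) : nab s f (Sum.inr (Sum.inl i)) (Sum.inr (Sum.inl j)) = fun _ => 0 := rfl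


lemma hasFDerivAt_Afun (s : ℕ) (f : Fin s → ℝ → ℝ) (hf : ∀ i, ContDiff ℝ (⊤ : ℕ∞) (f i))
    (P : Vc s) : HasFDerivAt (Afun s f) (Lm s f P) P := by
  have h1 : HasFDerivAt (fun Q : Vc s => FF s f (fun k => Q (uI k)))
      (∑ i, deriv (f i) (P (uI i)) • prj (uI i)) P := by
    refine HasFDerivAt.fun_sum fun i _ => ?_
    exact (((hf i).differentiable (by simp) (P (uI i))).hasDerivAt).comp_hasFDerivAt P
      (hasFDerivAt_apply (uI i) P)
  have h2 : HasFDerivAt (fun Q : Vc s => ∑ k, Q (uI k) * Q (tI k))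
      (∑ i, (P (uI i) • prj (tI i) + P (tI i) • prj (uI i))) P := by
    refine HasFDerivAt.fun_sum fun i _ => ?_
    exact (hasFDerivAt_apply (uI i) P).mul (hasFDerivAt_apply (tI i) P)
  exact (h1.const_mul (-2)).sub (h2.const_mul 2)

lemma fderiv_gFP (s : ℕ) (f : Fin s → ℝ → ℝ) (hf : ∀ i, ContDiff ℝ (⊤ : ℕ∞) (f i))
    (P : Vc s) (x y : Vc s) (w : Vc s) :
    fderiv ℝ (fun Q : Vc s => gFP s f Q x y) P w
      = (∑ i, x (uI i) * y (uI i)) * Lm s f P w := by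
  have h : HasFDerivAt (fun Q : Vc s => gFP s f Q x y)
      ((∑ i, x (uI i) * y (uI i)) • Lm s f P) P := by
    have heq : (fun Q : Vc s => gFP s f Q x y)
        = fun Q => Afun s f Q * (∑ i, x (uI i) * y (uI i))
            + ∑ i, (x (uI i) * y (vI i) + x (vI i) * y (uI i) - x (tI i) * y (tI i)) :=
      funext fun Q => gFP_eq s f Q x y
    rw [heq]
    exact ((hasFDerivAt_Afun s f hf P).mul_const _).add_const _
  rw [h.fderiv]; simp


/-- the explicit connection `∇` is the Levi-Civita connection of `g_F`:
it is (i) symmetric, `∇_{∂_a}∂_b = ∇_{∂_b}∂_a`, and (ii) metric compatible,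
`∂_a(g_F(∂_b,∂_c)) = g_F(∇_{∂_a}∂_b,∂_c) + g_F(∂_b,∇_{∂_a}∂_c)`, where `∂_a` acts on
the function `P ↦ g_F(P)(∂_b,∂_c)` as the corresponding partial derivative. -/
theorem stmt17 (s : ℕ) (hs : 2 ≤ s)
    (f : Fin s → ℝ → ℝ) (hf : ∀ i, ContDiff ℝ (⊤ : ℕ∞) (f i)) :
    (∀ a b : Ix s, nab s f a b = nab s f b a) ∧
    (∀ (a b c : Ix s) (P : Vc s),
      fderiv ℝ (fun Q : Vc s => gFP s f Q (stdb b) (stdb c)) P (stdb a) =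
        gFP s f P (nab s f a b P) (stdb c) + gFP s f P (stdb b) (nab s f a c P)) 
:= by
  constructor
  · intro a b
    rcases a with i | i | i <;> rcases b with j | j | j <;> try rfl
    · funext P
      by_cases h : i = j
      · subst h; rfl
      · simp [nab, h, Ne.symm h, add_comm]
    all_goals (funext P; simp [nab])
  · intro a b c P
    rw [fderiv_gFP s f hf]
    rcases a with i | i | i <;> rcases b with j | j | j <;> rcases c with k | k | k <;>
      (try rcases eq_or_ne i j with h1 | h1) <;> (try subst h1) <;>
      (try rcases eq_or_ne i k with h2 | h2) <;> (try subst h2) <;>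
      (try simp only [nab_vl, nab_vr, nab_tt', nab_tu]) <;>
      (try simp only [gR_u, gR_t, gR_v, gL_u, gL_t, gL_v, Lm_u, Lm_t, Lm_v]) <;>
      (try simp [*, nab_uu_self_u, nab_uu_self_v, nab_uu_self_t, nab_uu_ne_u, nab_uu_ne_t,
        nab_uu_ne_v, nab_ut_u, nab_ut_t, nab_ut_v, stdb, Pi.single_apply, uI, tI, vI,
        Finset.sum_ite_eq, mul_ite, ite_mul]) <;>
      (try split_ifs) <;> (try ring1) <;> (try subst_vars) <;> (try simp_all) <;> (try ring1) <;>
      (try exact fun h => absurd h.symm ‹_›)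
end
end
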